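/- Let X be a paracompact Hausdorff space, F = {F_i}_{i∈I} a locally finite closed family combinatorially refining an open family U = {U_i}_{i∈I} of subsets of X (F_i ⊂ U_i for all i). Then there exists an open locally finite family G = {G_i}_{i∈I} with F_i ⊂ G_i ⊂ cl(G_i) ⊂ U_i for every i ∈ I and the nerves of F and G are equal. -/

import Mathlib

/-!
Around each point `x` choose an open `W x` that meets only the `F i` containing `x` and whose
closure lies in all the corresponding `U i`. Take a locally finite open cover `P` that
star-refines `W` at every point, and let `G i` be the union of the members of `P` meeting `F i`.
If `y ∈ G i` for all `i ∈ K`, the members of `P` through `y` all lie in one `W a`, which then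
meets each `F i`, `i ∈ K`; hence `a ∈ ⋂ i ∈ K, F i`.
-/

open Set

namespace LocallyFinite

variable {ι κ X : Type*} [TopologicalSpace X]

theorem closure_biUnion {f : ι → Set X} (hf : LocallyFinite f) (s : Set ι) :
    closure (⋃ i ∈ s, f i) = ⋃ i ∈ s, closure (f i) := by
  simp only [biUnion_eq_iUnion]
  exact (hf.comp_injective Subtype.val_injective).closure_iUnion

theorem biUnion_of_finite_setOf_mem {P : κ → Set X} (hP : LocallyFinite P) {S : ι → Set κ}
    (hS : ∀ z, {i | z ∈ S i}.Finite) : LocallyFinite fun i => ⋃ z ∈ S i, P z := by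
  intro x
  obtain ⟨t, ht, htf⟩ := hP x
  refine ⟨t, ht, (htf.biUnion fun z _ => hS z).subset ?_⟩
  rintro i ⟨w, hw, hwt⟩
  obtain ⟨z, hz, hwz⟩ := mem_iUnion₂.1 hw
  exact mem_iUnion₂.2 ⟨z, ⟨w, hwz, hwt⟩, hz⟩

theorem exists_isOpen_mem_closure_subset_of_inter_nonempty [RegularSpace X] {F U : ι → Set X}
    (hF : LocallyFinite F) (hFc : ∀ i, IsClosed (F i)) (hUo : ∀ i, IsOpen (U i))
    (hFU : ∀ i, F i ⊆ U i) (x : X) :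
    ∃ W, IsOpen W ∧ x ∈ W ∧ ∀ i, (W ∩ F i).Nonempty → x ∈ F i ∧ closure W ⊆ U i := by
  set M := (⋂ i ∈ {i | x ∈ F i}, U i) ∩ ⋂ (i) (_ : x ∉ F i), (F i)ᶜ
  have hM : M ∈ nhds x :=
    Filter.inter_mem (((hF.point_finite x).isOpen_biInter fun i _ => hUo i).mem_nhds
      (mem_iInter₂.2 fun i hi => hFU i hi)) (hF.iInter_compl_mem_nhds hFc x)
  obtain ⟨t, ht, htc, htM⟩ := exists_mem_nhds_isClosed_subset hM
  refine ⟨interior t, isOpen_interior, mem_interior_iff_mem_nhds.2 ht, ?_⟩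
  rintro i ⟨y, hyt, hyF⟩
  have hxF : x ∈ F i := by
    by_contra hxF
    exact mem_iInter₂.1 (htM (interior_subset hyt)).2 i hxF hyF
  refine ⟨hxF, fun z hz => ?_⟩
  exact mem_iInter₂.1 (htM (closure_minimal interior_subset htc hz)).1 i hxF

end LocallyFinite

theorem exists_locallyFinite_isOpen_cover_star_subset {ι X : Type*} [TopologicalSpace X]
    [ParacompactSpace X] [T2Space X] (W : ι → Set X) (hWo : ∀ a, IsOpen (W a))
    (hWc : ⋃ a, W a = univ) :
    ∃ P : X → Set X, (∀ z, IsOpen (P z)) ∧ ⋃ z, P z = univ ∧ LocallyFinite P ∧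
      (∀ z, ∃ a, P z ⊆ W a) ∧ ∀ y, ∃ a, ∀ z, y ∈ P z → P z ⊆ W a := by
  obtain ⟨O, hOo, hOc, hOlf, hOW⟩ := precise_refinement W hWo hWc
  obtain ⟨V, hVc, -, hVO⟩ := exists_iUnion_eq_closure_subset hOo hOlf.point_finite hOc
  choose E hEo hzE hE using
    (hOlf.subset hVO).exists_isOpen_mem_closure_subset_of_inter_nonempty
      (fun _ => isClosed_closure) hOo hVO
  obtain ⟨P, hPo, hPc, hPlf, hPE⟩ :=
    precise_refinement E hEo (iUnion_eq_univ_iff.2 fun z => ⟨z, hzE z⟩)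
  -- `E z` meets `closure (V a)` at any of its points lying in `V a`, so `E z ⊆ O a ⊆ W a`.
  have hPW : ∀ y z a, y ∈ E z → y ∈ V a → P z ⊆ W a := fun y z a hyz hya =>
    (hPE z).trans <| subset_closure.trans <|
      (hE z a ⟨y, hyz, subset_closure hya⟩).2.trans (hOW a)
  refine ⟨P, hPo, hPc, hPlf, fun z => ?_, fun y => ?_⟩
  · obtain ⟨a, ha⟩ := iUnion_eq_univ_iff.1 hVc z
    exact ⟨a, hPW z z a (hzE z) ha⟩
  · obtain ⟨a, ha⟩ := iUnion_eq_univ_iff.1 hVc y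
    exact ⟨a, fun z hyz => hPW y z a (hPE z hyz) ha⟩

theorem exists_open_locallyFinite_swelling_same_nerve_of_paracompact
    {X : Type*} [TopologicalSpace X] [ParacompactSpace X] [T2Space X] {I : Type*}
    (F U : I → Set X) (hFc : ∀ i, IsClosed (F i)) (hUo : ∀ i, IsOpen (U i))
    (hFU : ∀ i, F i ⊆ U i) (hFlf : LocallyFinite F) :
    ∃ G : I → Set X, (∀ i, IsOpen (G i)) ∧ LocallyFinite G ∧
      (∀ i, F i ⊆ G i) ∧ (∀ i, closure (G i) ⊆ U i) ∧
      ∀ K : Finset I, (⋂ i ∈ K, G i).Nonempty ↔ (⋂ i ∈ K, F i).Nonempty := by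
  choose W hWo hxW hW using hFlf.exists_isOpen_mem_closure_subset_of_inter_nonempty hFc hUo hFU
  obtain ⟨P, hPo, hPc, hPlf, hPW, hstar⟩ := exists_locallyFinite_isOpen_cover_star_subset W hWo
    (iUnion_eq_univ_iff.2 fun x => ⟨x, hxW x⟩)
  have hPF : ∀ z a i, P z ⊆ W a → (P z ∩ F i).Nonempty → a ∈ F i ∧ closure (W a) ⊆ U i :=
    fun z a i hza h => hW a i (h.mono (inter_subset_inter_left _ hza))
  set G : I → Set X := fun i => ⋃ z ∈ {z | (P z ∩ F i).Nonempty}, P z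
  have hFG : ∀ i, F i ⊆ G i := fun i x hx => by
    obtain ⟨z, hz⟩ := iUnion_eq_univ_iff.1 hPc x
    exact mem_biUnion ⟨x, hz, hx⟩ hz
  refine ⟨G, fun i => isOpen_biUnion fun z _ => hPo z, ?_, hFG, fun i => ?_, fun K => ⟨?_, ?_⟩⟩
  · refine hPlf.biUnion_of_finite_setOf_mem fun z => ?_
    obtain ⟨a, ha⟩ := hPW z
    exact (hFlf.point_finite a).subset fun i hi => (hPF z a i ha hi).1
  · rw [hPlf.closure_biUnion]
    refine iUnion₂_subset fun z hz => ?_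
    obtain ⟨a, ha⟩ := hPW z
    exact (closure_mono ha).trans (hPF z a i ha hz).2
  · rintro ⟨y, hy⟩
    obtain ⟨a, ha⟩ := hstar y
    refine ⟨a, mem_iInter₂.2 fun i hi => ?_⟩
    obtain ⟨z, hz, hyz⟩ := mem_iUnion₂.1 (mem_iInter₂.1 hy i hi)
    exact (hPF z a i (ha z hyz) hz).1
  · exact fun ⟨y, hy⟩ => ⟨y, iInter₂_mono (fun i _ => hFG i) hy⟩
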